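/- For the two-level certification function f : S → {1,…,d} defined above, the adversary bound satisfies ADV(f) ≥ d − 1. -/

import Mathlib

open Matrix

noncomputable def specNorm {n : Type*} [Fintype n] [DecidableEq n] (M : Matrix n n ℝ) : ℝ :=
  ‖Matrix.toEuclideanCLM (𝕜 := ℝ) M‖

def diffMatrix {V ι : Type*} (inp : V → ι → Bool) (i : ι) : Matrix V V ℝ :=
  Matrix.of fun x y => if inp x i ≠ inp y i then (1 : ℝ) else 0

noncomputable def ADV {V ι σ : Type*} [Fintype V] [DecidableEq V] [Fintype ι]
    (inp : V → ι → Bool) (f : V → σ) : ℝ :=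
  sSup { r : ℝ | ∃ Γ : Matrix V V ℝ, Γ ≠ 0 ∧ Γ.IsSymm ∧ (∀ x y, 0 ≤ Γ x y) ∧
    (∀ x y, f x = f y → Γ x y = 0) ∧
    r = specNorm Γ / ⨆ i : ι, specNorm (Γ ⊙ diffMatrix inp i) }

def inS (d : ℕ) (x : Fin d → Fin d → Bool) : Prop :=
  ∃ b : Fin d, (∀ i, x b i = true) ∧
    ∀ b', b' ≠ b → (Finset.univ.filter fun i => x b' i = false).card = 1

instance (d : ℕ) : DecidablePred (inS d) := fun x => by unfold inS; infer_instance

/-!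
Take for `Γ` the adjacency matrix of the graph on `S` joining `x` and `y` when their all-true
rows differ and all other rows agree. A neighbour of `x` is determined by its all-true row
`b ≠ f x` and the single position `k` where its row `f x` is false, so every vertex has degree
`(d - 1) * d` and the all-ones vector gives `‖Γ‖ ≥ (d - 1) * d`. For the neighbours that differ
from `x` in a fixed variable `(p, q)` one of these choices is forced (`k = q` if `p = f x`,
`b = p` otherwise), so the rows of `Γ ∘ D_(p,q)` sum to at most `d`, and the Schur test gives
`‖Γ ∘ D_(p,q)‖ ≤ d`.
-/

section SpecNorm

variable {n : Type*} [Fintype n] [DecidableEq n]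

lemma abs_apply_le_specNorm (M : Matrix n n ℝ) (x y : n) : |M x y| ≤ specNorm M := by
  have h := (Matrix.toEuclideanCLM (𝕜 := ℝ) M).le_opNorm (EuclideanSpace.single y 1)
  rw [PiLp.norm_single, norm_one, mul_one] at h
  refine le_trans (le_of_eq ?_) ((PiLp.norm_apply_le _ x).trans h)
  simp [Matrix.mulVec, dotProduct]

/-- Schur test. -/
theorem specNorm_le_of_sum_le {M : Matrix n n ℝ} {R : ℝ} (hR : 0 ≤ R) (hM : ∀ x y, 0 ≤ M x y)
    (hrow : ∀ x, ∑ y, M x y ≤ R) (hcol : ∀ y, ∑ x, M x y ≤ R) : specNorm M ≤ R := by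
  refine ContinuousLinearMap.opNorm_le_bound _ hR fun u => ?_
  have hsq : ‖Matrix.toEuclideanCLM (𝕜 := ℝ) M u‖ ^ 2 ≤ (R * ‖u‖) ^ 2 := by
    simp only [mul_pow, PiLp.norm_sq_eq_of_L2, Real.norm_eq_abs, sq_abs]
    -- Cauchy–Schwarz with the weights `M x y` in each row
    have hrow_cs : ∀ x, (M *ᵥ u.ofLp) x ^ 2 ≤ R * ∑ y, M x y * u y ^ 2 := fun x =>
      (Finset.sum_sq_le_sum_mul_sum_of_sq_le_mul _ (fun y _ => hM x y)
        (fun y _ => mul_nonneg (hM x y) (sq_nonneg _)) (fun y _ => le_of_eq (by ring))).trans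
        (mul_le_mul_of_nonneg_right (hrow x) (Finset.sum_nonneg fun y _ =>
          mul_nonneg (hM x y) (sq_nonneg _)))
    calc ∑ x, (Matrix.toEuclideanCLM (𝕜 := ℝ) M u) x ^ 2
        ≤ ∑ x, R * ∑ y, M x y * u y ^ 2 := Finset.sum_le_sum fun x _ => hrow_cs x
      _ = R * ∑ y, (∑ x, M x y) * u y ^ 2 := by
        simp only [← Finset.mul_sum, Finset.sum_mul]
        rw [Finset.sum_comm]
      _ ≤ R * ∑ y, R * u y ^ 2 := by
        gcongr with y
        exact hcol y
      _ = R ^ 2 * ∑ y, u y ^ 2 := by rw [← Finset.mul_sum]; ring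
  exact (pow_le_pow_iff_left₀ (norm_nonneg _) (by positivity) two_ne_zero).mp hsq

lemma le_specNorm_of_le_sum [Nonempty n] {M : Matrix n n ℝ} {c : ℝ} (hc : 0 ≤ c)
    (hrow : ∀ x, c ≤ ∑ y, M x y) : c ≤ specNorm M := by
  set u : EuclideanSpace ℝ n := WithLp.toLp 2 fun _ => 1
  have hu : 0 < ‖u‖ := by
    rw [norm_pos_iff]
    intro h
    simpa [u] using congrArg (· (Classical.arbitrary n)) h
  have hsq : (c * ‖u‖) ^ 2 ≤ ‖Matrix.toEuclideanCLM (𝕜 := ℝ) M u‖ ^ 2 := by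
    simp only [mul_pow, PiLp.norm_sq_eq_of_L2, Real.norm_eq_abs, sq_abs, Finset.mul_sum]
    refine Finset.sum_le_sum fun x _ => ?_
    have hx : (Matrix.toEuclideanCLM (𝕜 := ℝ) M u) x = ∑ y, M x y := by
      simp [u, Matrix.mulVec, dotProduct]
    rw [hx]
    simpa [u] using pow_le_pow_left₀ hc (hrow x) 2
  have hle := (pow_le_pow_iff_left₀ (by positivity) (norm_nonneg _) two_ne_zero).mp hsq
  exact le_of_mul_le_mul_right (hle.trans ((Matrix.toEuclideanCLM (𝕜 := ℝ) M).le_opNorm u)) hu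

end SpecNorm

section Adversary

variable {V ι σ : Type*} [Fintype V] [DecidableEq V] [Fintype ι]
  {inp : V → ι → Bool} {f : V → σ} {Γ : Matrix V V ℝ}

lemma apply_le_iSup_specNorm_hadamard (hsep : ∀ x y, f x ≠ f y → ∃ i, inp x i ≠ inp y i)
    (hzero : ∀ x y, f x = f y → Γ x y = 0) (x y : V) :
    Γ x y ≤ ⨆ i, specNorm (Γ ⊙ diffMatrix inp i) := by
  by_cases hxy : f x = f y
  · rw [hzero x y hxy]
    exact Real.iSup_nonneg fun i => norm_nonneg _
  obtain ⟨i, hi⟩ := hsep x y hxy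
  have hentry : (Γ ⊙ diffMatrix inp i) x y = Γ x y := by
    simp [Matrix.hadamard_apply, diffMatrix, hi]
  calc Γ x y ≤ specNorm (Γ ⊙ diffMatrix inp i) := by
        rw [← hentry]; exact le_of_abs_le (abs_apply_le_specNorm _ x y)
    _ ≤ ⨆ i, specNorm (Γ ⊙ diffMatrix inp i) :=
        le_ciSup (f := fun i => specNorm (Γ ⊙ diffMatrix inp i)) (Finite.bddAbove_range _) i

lemma specNorm_div_iSup_le_card (hsep : ∀ x y, f x ≠ f y → ∃ i, inp x i ≠ inp y i)
    (hnn : ∀ x y, 0 ≤ Γ x y) (hzero : ∀ x y, f x = f y → Γ x y = 0) :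
    specNorm Γ / ⨆ i, specNorm (Γ ⊙ diffMatrix inp i) ≤ Fintype.card V := by
  set D := ⨆ i, specNorm (Γ ⊙ diffMatrix inp i)
  have hD : 0 ≤ D := Real.iSup_nonneg fun i => norm_nonneg _
  have hsum : ∀ x, ∑ y, Γ x y ≤ Fintype.card V * D := fun x =>
    (Finset.sum_le_sum fun y _ => apply_le_iSup_specNorm_hadamard hsep hzero x y).trans_eq
      (by simp [D])
  have hsum' : ∀ y, ∑ x, Γ x y ≤ Fintype.card V * D := fun y =>
    (Finset.sum_le_sum fun x _ => apply_le_iSup_specNorm_hadamard hsep hzero x y).trans_eq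
      (by simp [D])
  exact div_le_of_le_mul₀ hD (Nat.cast_nonneg _)
    (specNorm_le_of_sum_le (by positivity) hnn hsum hsum')

-- `ADV` is an `sSup` in `ℝ`, which is junk (`0`) unless this set is bounded above.
lemma bddAbove_adversary_ratios (hsep : ∀ x y, f x ≠ f y → ∃ i, inp x i ≠ inp y i) :
    BddAbove { r : ℝ | ∃ Γ : Matrix V V ℝ, Γ ≠ 0 ∧ Γ.IsSymm ∧ (∀ x y, 0 ≤ Γ x y) ∧
      (∀ x y, f x = f y → Γ x y = 0) ∧
      r = specNorm Γ / ⨆ i : ι, specNorm (Γ ⊙ diffMatrix inp i) } := by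
  refine ⟨Fintype.card V, ?_⟩
  rintro r ⟨Γ, -, -, hnn, hzero, rfl⟩
  exact specNorm_div_iSup_le_card hsep hnn hzero

theorem div_le_ADV (hsep : ∀ x y, f x ≠ f y → ∃ i, inp x i ≠ inp y i)
    (hΓ : Γ ≠ 0) (hsymm : Γ.IsSymm) (hnn : ∀ x y, 0 ≤ Γ x y)
    (hzero : ∀ x y, f x = f y → Γ x y = 0) {A B : ℝ} (hA : A ≤ specNorm Γ)
    (hB : ∀ i, specNorm (Γ ⊙ diffMatrix inp i) ≤ B) :
    A / B ≤ ADV inp f := by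
  set D := ⨆ i, specNorm (Γ ⊙ diffMatrix inp i)
  obtain ⟨x, y, hxy⟩ : ∃ x y, Γ x y ≠ 0 := by
    by_contra! h
    exact hΓ (Matrix.ext h)
  have hD : 0 < D :=
    ((hnn x y).lt_of_ne' hxy).trans_le (apply_le_iSup_specNorm_hadamard hsep hzero x y)
  have : Nonempty ι := by
    obtain ⟨i, -⟩ := hsep x y fun h => hxy (hzero x y h)
    exact ⟨i⟩
  have hDB : D ≤ B := ciSup_le hB
  calc A / B ≤ specNorm Γ / B := div_le_div_of_nonneg_right hA (hD.le.trans hDB)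
    _ ≤ specNorm Γ / D := div_le_div_of_nonneg_left (norm_nonneg _) hD hDB
    _ ≤ ADV inp f := le_csSup (bddAbove_adversary_ratios hsep) ⟨Γ, hΓ, hsymm, hnn, hzero, rfl⟩

end Adversary

namespace TwoLevel

abbrev S (d : ℕ) := {x : Fin d → Fin d → Bool // inS d x}

variable {d : ℕ}

lemma nonempty_S (hd : 0 < d) : Nonempty (S d) := by
  let z : Fin d := ⟨0, hd⟩
  refine ⟨⟨fun p q => p = z || q ≠ z, z, fun i => by simp, fun p hp => ?_⟩⟩
  rw [Finset.card_eq_one]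
  exact ⟨z, by ext i; simp [hp]⟩

def graph (f : S d → Fin d) : SimpleGraph (S d) where
  Adj x y := f x ≠ f y ∧ ∀ p, p ≠ f x → p ≠ f y → x.1 p = y.1 p
  symm := ⟨fun _ _ h => ⟨h.1.symm, fun p hy hx => (h.2 p hx hy).symm⟩⟩
  loopless := ⟨fun _ h => h.1 rfl⟩

lemma graph_adj {f : S d → Fin d} {x y : S d} :
    (graph f).Adj x y ↔ f x ≠ f y ∧ ∀ p, p ≠ f x → p ≠ f y → x.1 p = y.1 p :=
  Iff.rfl

instance (f : S d → Fin d) : DecidableRel (graph f).Adj := fun x y => by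
  unfold graph; infer_instance

def moveRows (f : S d → Fin d) (x : S d) (b k : Fin d) : Fin d → Fin d → Bool :=
  fun p q => if p = b then true else if p = f x then decide (q ≠ k) else x.1 p q

section Certificate

variable {f : S d → Fin d} (hf : ∀ (x : S d) (i : Fin d), x.1 (f x) i = true)
include hf

lemma eq_of_forall_true {x : S d} {p : Fin d} (hp : ∀ i, x.1 p i = true) : p = f x := by
  obtain ⟨b, -, hb⟩ := x.2
  have key : ∀ r, (∀ i, x.1 r i = true) → r = b := fun r hr => by
    by_contra hrb
    obtain ⟨i, hi⟩ := Finset.card_pos.mp ((hb r hrb).symm ▸ Nat.one_pos)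
    simp [hr i] at hi
  rw [key p hp, key (f x) (hf x)]

lemma card_false_eq_one {x : S d} {p : Fin d} (hp : p ≠ f x) :
    (Finset.univ.filter fun i => x.1 p i = false).card = 1 := by
  obtain ⟨b, hbt, hb⟩ := x.2
  exact hb p (eq_of_forall_true hf hbt ▸ hp)

lemma exists_false {x : S d} {p : Fin d} (hp : p ≠ f x) : ∃ k, x.1 p k = false := by
  obtain ⟨k, hk⟩ := Finset.card_pos.mp ((card_false_eq_one hf hp).symm ▸ Nat.one_pos)
  exact ⟨k, (Finset.mem_filter.mp hk).2⟩

lemma eq_of_false {x : S d} {p k q : Fin d} (hp : p ≠ f x) (hk : x.1 p k = false)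
    (hq : x.1 p q = false) : q = k :=
  Finset.card_le_one.mp (card_false_eq_one hf hp).le q (by simpa using hq) k (by simpa using hk)

lemma exists_ne_of_ne {x y : S d} (h : f x ≠ f y) :
    ∃ i : Fin d × Fin d, x.1 i.1 i.2 ≠ y.1 i.1 i.2 := by
  obtain ⟨k, hk⟩ := exists_false hf h
  exact ⟨(f x, k), by simp [hf x k, hk]⟩

lemma inS_moveRows (x : S d) (b k : Fin d) : inS d (moveRows f x b k) := by
  refine ⟨b, fun i => by simp [moveRows], fun p hp => ?_⟩
  by_cases hpx : p = f x
  · subst hpx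
    rw [Finset.card_eq_one]
    exact ⟨k, by ext q; simp [moveRows, hp]⟩
  · simpa [moveRows, hp, hpx] using card_false_eq_one hf hpx

def neighbor (x : S d) (b k : Fin d) : S d := ⟨moveRows f x b k, inS_moveRows hf x b k⟩

lemma f_neighbor (x : S d) (b k : Fin d) : f (neighbor hf x b k) = b :=
  (eq_of_forall_true hf fun i => by simp [neighbor, moveRows]).symm

lemma adj_neighbor {x : S d} {b : Fin d} (hb : b ≠ f x) (k : Fin d) :
    (graph f).Adj x (neighbor hf x b k) := by
  refine graph_adj.mpr ⟨by rw [f_neighbor hf]; exact hb.symm, fun p hpx hpb => ?_⟩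
  rw [f_neighbor hf] at hpb
  ext q
  simp [neighbor, moveRows, hpx, hpb]

lemma eq_neighbor {x y : S d} (hxy : (graph f).Adj x y) {k : Fin d}
    (hk : y.1 (f x) k = false) :
    y = neighbor hf x (f y) k := by
  obtain ⟨hne, hrows⟩ := graph_adj.mp hxy
  apply Subtype.ext
  funext p q
  by_cases hpy : p = f y
  · simp [neighbor, moveRows, hpy, hf y q]
  by_cases hpx : p = f x
  · subst hpx
    by_cases hqk : q = k
    · simp [neighbor, moveRows, hne, hqk, hk]
    · have : y.1 (f x) q = true := by
        by_contra h
        exact hqk (eq_of_false hf hne hk (by simpa using h))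
      simp [neighbor, moveRows, hne, hqk, this]
  · simp [neighbor, moveRows, hpy, hpx, hrows p hpx hpy]

lemma le_degree (x : S d) : (d - 1) * d ≤ (graph f).degree x := by
  have hcard : (Finset.univ.erase (f x) ×ˢ (Finset.univ : Finset (Fin d))).card
      = (d - 1) * d := by
    simp [Finset.card_product, Finset.card_erase_of_mem]
  rw [← hcard, ← SimpleGraph.card_neighborFinset_eq_degree]
  refine Finset.card_le_card_of_injOn (fun bk => neighbor hf x bk.1 bk.2) ?_ ?_
  · rintro ⟨b, k⟩ hbk
    simp only [Finset.coe_product, Set.mem_prod, Finset.coe_erase, Set.mem_sdiff,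
      Set.mem_singleton_iff] at hbk
    simpa using adj_neighbor hf hbk.1.2 k
  · rintro ⟨b, k⟩ hbk ⟨b', k'⟩ - h
    simp only [Finset.coe_product, Set.mem_prod, Finset.coe_erase, Set.mem_sdiff,
      Set.mem_singleton_iff] at hbk
    obtain rfl : b = b' := by simpa [f_neighbor hf] using congrArg f h
    have hrow := congrFun (congrFun (congrArg Subtype.val h) (f x)) k
    simp [neighbor, moveRows, Ne.symm hbk.1.2] at hrow
    simp [hrow]

lemma card_adj_ne_le (x : S d) (p q : Fin d) :
    (Finset.univ.filter fun y => (graph f).Adj x y ∧ x.1 p q ≠ y.1 p q).card ≤ d := by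
  obtain ⟨g, hg⟩ : ∃ g : Fin d → S d,
      ∀ y, (graph f).Adj x y → x.1 p q ≠ y.1 p q → ∃ k, g k = y := by
    by_cases hpx : p = f x
    · subst hpx
      refine ⟨fun b => neighbor hf x b q, fun y hxy hne => ⟨f y, (eq_neighbor hf hxy ?_).symm⟩⟩
      simpa [hf x q] using hne.symm
    · refine ⟨neighbor hf x p, fun y hxy hne => ?_⟩
      have hpy : p = f y := by
        by_contra hpy
        exact hne (congrFun ((graph_adj.mp hxy).2 p hpx hpy) q)
      obtain ⟨k, hk⟩ := exists_false hf (graph_adj.mp hxy).1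
      exact ⟨k, by rw [hpy]; exact (eq_neighbor hf hxy hk).symm⟩
  calc _ ≤ (Finset.univ : Finset (Fin d)).card :=
        Finset.card_le_card_of_surjOn g fun y hy => by
          obtain ⟨-, hxy, hne⟩ := Finset.mem_filter.mp hy
          obtain ⟨k, hk⟩ := hg y hxy hne
          exact ⟨k, Finset.mem_coe.mpr (Finset.mem_univ k), hk⟩
    _ = d := by simp

lemma le_specNorm_adjMatrix (hd : 0 < d) :
    ((d : ℝ) - 1) * d ≤ specNorm ((graph f).adjMatrix ℝ) := by
  have := nonempty_S hd
  refine le_specNorm_of_le_sum (by nlinarith [(Nat.one_le_cast (α := ℝ)).mpr hd]) fun x => ?_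
  have hdeg : (((d - 1) * d : ℕ) : ℝ) ≤ (graph f).degree x := Nat.cast_le.mpr (le_degree hf x)
  simpa [SimpleGraph.adjMatrix_apply, Finset.sum_boole, Nat.cast_sub hd,
    ← SimpleGraph.card_neighborFinset_eq_degree, SimpleGraph.neighborFinset_def] using hdeg

lemma specNorm_adjMatrix_hadamard_diffMatrix_le (i : Fin d × Fin d) :
    specNorm ((graph f).adjMatrix ℝ ⊙ diffMatrix (fun (x : S d) p => x.1 p.1 p.2) i) ≤ d := by
  set H := (graph f).adjMatrix ℝ ⊙ diffMatrix (fun (x : S d) p => x.1 p.1 p.2) i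
  have hH : ∀ x y, H x y = if (graph f).Adj x y ∧ x.1 i.1 i.2 ≠ y.1 i.1 i.2 then 1 else 0 := by
    intro x y
    by_cases h : (graph f).Adj x y <;> simp [H, diffMatrix, h]
  have hrow : ∀ x, ∑ y, H x y ≤ d := fun x => by
    simpa [hH, Finset.sum_boole] using card_adj_ne_le hf x i.1 i.2
  have hsymm : ∀ x y, H x y = H y x := fun x y => by
    simp only [hH, (graph f).adj_comm x y, ne_comm]
  refine specNorm_le_of_sum_le (Nat.cast_nonneg d) (fun x y => ?_) hrow fun y => ?_
  · rw [hH]; split_ifs <;> norm_num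
  · simpa only [hsymm _ y] using hrow y

end Certificate

end TwoLevel

open TwoLevel

theorem twoLevel_adv_lower_bound (d : ℕ) (hd : 2 ≤ d)
    (f : {x : Fin d → Fin d → Bool // inS d x} → Fin d)
    (hf : ∀ (x : {x : Fin d → Fin d → Bool // inS d x}) (i : Fin d), x.1 (f x) i = true) :
    (d : ℝ) - 1 ≤
      ADV (fun (x : {x : Fin d → Fin d → Bool // inS d x}) (p : Fin d × Fin d) =>
        x.1 p.1 p.2) f := by
  have hd0 : 0 < d := by omega
  have hnorm := le_specNorm_adjMatrix hf hd0
  have hΓ : (graph f).adjMatrix ℝ ≠ 0 := by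
    intro h
    have hd1 : (1 : ℝ) < d := by exact_mod_cast hd
    rw [h, specNorm, map_zero, norm_zero] at hnorm
    nlinarith
  calc (d : ℝ) - 1 = ((d : ℝ) - 1) * d / d := by field_simp
    _ ≤ _ := div_le_ADV (fun _ _ => exists_ne_of_ne hf) hΓ
      (SimpleGraph.isSymm_adjMatrix _)
      (fun x y => by by_cases h : (graph f).Adj x y <;> simp [h])
      (fun x y h => by simp [graph_adj, h]) hnorm (specNorm_adjMatrix_hadamard_diffMatrix_le hf)
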